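/- Let x₀ < x₁ and y₀ < y₁ and let Q := [x₀, x₁] × [y₀, y₁]. Suppose u : ℝ² → ℝ is twice continuously differentiable on an open set containing Q with L*[u] = 0 on Q and u(x, y₀) = exp(∫_{x₀}^{x} b(s, y₀) ds) for x ∈ [x₀, x₁], u(x₀, y) = exp(∫_{y₀}^{y} a(x₀, s) ds) for y ∈ [y₀, y₁]; and suppose z : ℝ² → ℝ is twice continuously differentiable on an open set containing Q with L[z] = 0 on Q and z(x, y₁) = exp(−∫_{x₁}^{x} b(s, y₁) ds) for x ∈ [x₀, x₁], z(x₁, y) = exp(−∫_{y₁}^{y} a(x₁, s) ds) for y ∈ [y₀, y₁]. Then z(x₀, y₀) = u(x₁, y₁); that is, the Riemann kernel of the adjoint equation with pole (x₀, y₀), evaluated at (x₁, y₁), equals the Riemann kernel of the original equation with pole (x₁, y₁), evaluated at (x₀, y₀). -/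

import Mathlib

open Set

/-- Partial derivative in the first variable. -/
noncomputable def pdx (f : ℝ × ℝ → ℝ) (p : ℝ × ℝ) : ℝ :=
  deriv (fun x => f (x, p.2)) p.1

/-- Partial derivative in the second variable. -/
noncomputable def pdy (f : ℝ × ℝ → ℝ) (p : ℝ × ℝ) : ℝ :=
  deriv (fun y => f (p.1, y)) p.2

/-- Mixed second partial derivative `∂²f/∂x∂y` (first in `x`, then in `y`). -/
noncomputable def pdxy (f : ℝ × ℝ → ℝ) (p : ℝ × ℝ) : ℝ :=
  pdy (fun q => pdx f q) p

/-- The canonical hyperbolic operator `L[z] = ∂²z/∂x∂y + a ∂z/∂x + b ∂z/∂y + c z`. -/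
noncomputable def Lop (a b c z : ℝ × ℝ → ℝ) (p : ℝ × ℝ) : ℝ :=
  pdxy z p + a p * pdx z p + b p * pdy z p + c p * z p

/-- The adjoint operator `L*[u] = ∂²u/∂x∂y − ∂(au)/∂x − ∂(bu)/∂y + c u`. -/
noncomputable def LstarOp (a b c u : ℝ × ℝ → ℝ) (p : ℝ × ℝ) : ℝ :=
  pdxy u p - pdx (fun q => a q * u q) p - pdy (fun q => b q * u q) p + c p * u p

/-!
Lagrange's identity `u L[z] - z L*[u] = ∂ₓF + ∂ᵧG`, with `F = u z_y + a u z` and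
`G = b u z - z u_x` (it needs `z_xy = z_yx`, hence `z ∈ C²`), makes `(F, G)` divergence free
on `Q`, so its flux through `∂Q` vanishes. The characteristic data give `u_x = b u` on
`y = y₀`, `u_y = a u` on `x = x₀`, `z_x = -b z` on `y = y₁` and `z_y = -a z` on `x = x₁`.
Thus the flux through `y = y₀` and `x = x₁` is zero, while on `x = x₀` and `y = y₁` the
integrands are `∂ᵧ(u z)` and `-∂ₓ(u z)`; the balance reads `(u z)(x₀, y₀) = (u z)(x₁, y₁)`,
and `u(x₀, y₀) = z(x₁, y₁) = 1`.
-/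

open MeasureTheory intervalIntegral

section PartialDerivatives

variable {f : ℝ × ℝ → ℝ} {p : ℝ × ℝ} {O : Set (ℝ × ℝ)}

theorem HasFDerivAt.pdx_eq {f' : ℝ × ℝ →L[ℝ] ℝ} (hf : HasFDerivAt f f' p) :
    pdx f p = f' (1, 0) :=
  (hf.comp_hasDerivAt p.1 ((hasDerivAt_id _).prodMk (hasDerivAt_const _ p.2))).deriv

theorem HasFDerivAt.pdy_eq {f' : ℝ × ℝ →L[ℝ] ℝ} (hf : HasFDerivAt f f' p) :
    pdy f p = f' (0, 1) :=
  (hf.comp_hasDerivAt p.2 ((hasDerivAt_const _ p.1).prodMk (hasDerivAt_id _))).deriv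

theorem DifferentiableAt.hasDerivAt_pdx {x y : ℝ} (hf : DifferentiableAt ℝ f (x, y)) :
    HasDerivAt (fun x' => f (x', y)) (pdx f (x, y)) x :=
  (hf.comp x (differentiableAt_id.prodMk (differentiableAt_const y))).hasDerivAt

theorem DifferentiableAt.hasDerivAt_pdy {x y : ℝ} (hf : DifferentiableAt ℝ f (x, y)) :
    HasDerivAt (fun y' => f (x, y')) (pdy f (x, y)) y :=
  (hf.comp y ((differentiableAt_const x).prodMk differentiableAt_id)).hasDerivAt

theorem ContDiffOn.pdx {m n : WithTop ℕ∞} (hO : IsOpen O) (hf : ContDiffOn ℝ n f O)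
    (hmn : m + 1 ≤ n) : ContDiffOn ℝ m (pdx f) O :=
  ((hf.fderiv_of_isOpen hO hmn).clm_apply contDiffOn_const).congr fun _ hq =>
    ((hf.contDiffAt (hO.mem_nhds hq)).differentiableAt
      (zero_lt_one.trans_le (le_add_self.trans hmn)).ne').hasFDerivAt.pdx_eq

theorem ContDiffOn.pdy {m n : WithTop ℕ∞} (hO : IsOpen O) (hf : ContDiffOn ℝ n f O)
    (hmn : m + 1 ≤ n) : ContDiffOn ℝ m (pdy f) O :=
  ((hf.fderiv_of_isOpen hO hmn).clm_apply contDiffOn_const).congr fun _ hq =>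
    ((hf.contDiffAt (hO.mem_nhds hq)).differentiableAt
      (zero_lt_one.trans_le (le_add_self.trans hmn)).ne').hasFDerivAt.pdy_eq

theorem hasFDerivAt_fderiv_apply (hO : IsOpen O) (hf : ContDiffOn ℝ 2 f O)
    (hp : p ∈ O) (v : ℝ × ℝ) :
    HasFDerivAt (fun q => fderiv ℝ f q v) ((fderiv ℝ (fderiv ℝ f) p).flip v) p := by
  have hf' : DifferentiableAt ℝ (fderiv ℝ f) p :=
    ((hf.fderiv_of_isOpen hO (by norm_num : (1 : WithTop ℕ∞) + 1 ≤ 2)).contDiffAt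
      (hO.mem_nhds hp)).differentiableAt one_ne_zero
  simpa using hf'.hasFDerivAt.clm_apply (hasFDerivAt_const v p)

theorem pdx_pdy_eq_pdxy (hO : IsOpen O) (hf : ContDiffOn ℝ 2 f O) (hp : p ∈ O) :
    pdx (pdy f) p = pdxy f p := by
  have hdiff : DifferentiableOn ℝ f O := hf.differentiableOn two_ne_zero
  have hx : HasFDerivAt (pdx f) ((fderiv ℝ (fderiv ℝ f) p).flip (1, 0)) p :=
    (hasFDerivAt_fderiv_apply hO hf hp _).congr_of_eventuallyEq <|
      Filter.eventually_of_mem (hO.mem_nhds hp) fun q hq =>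
        (hdiff.differentiableAt (hO.mem_nhds hq)).hasFDerivAt.pdx_eq
  have hy : HasFDerivAt (pdy f) ((fderiv ℝ (fderiv ℝ f) p).flip (0, 1)) p :=
    (hasFDerivAt_fderiv_apply hO hf hp _).congr_of_eventuallyEq <|
      Filter.eventually_of_mem (hO.mem_nhds hp) fun q hq =>
        (hdiff.differentiableAt (hO.mem_nhds hq)).hasFDerivAt.pdy_eq
  rw [pdxy, hx.pdy_eq, hy.pdx_eq]
  exact ((hf.contDiffAt (hO.mem_nhds hp)).isSymmSndFDerivAt (by simp)) _ _

end PartialDerivatives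

theorem boundary_integral_eq_zero_of_pdx_add_pdy_eq_zero {F G : ℝ × ℝ → ℝ} {x₀ x₁ y₀ y₁ : ℝ}
    (hx : x₀ ≤ x₁) (hy : y₀ ≤ y₁)
    (hF : ∀ p ∈ Icc x₀ x₁ ×ˢ Icc y₀ y₁, DifferentiableAt ℝ F p)
    (hG : ∀ p ∈ Icc x₀ x₁ ×ˢ Icc y₀ y₁, DifferentiableAt ℝ G p)
    (hdiv : ∀ p ∈ Icc x₀ x₁ ×ˢ Icc y₀ y₁, pdx F p + pdy G p = 0) :
    (((∫ x in x₀..x₁, G (x, y₁)) - ∫ x in x₀..x₁, G (x, y₀)) + ∫ y in y₀..y₁, F (x₁, y))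
      - ∫ y in y₀..y₁, F (x₀, y) = 0 := by
  have hQ : Icc (x₀, y₀) (x₁, y₁) = Icc x₀ x₁ ×ˢ Icc y₀ y₁ := Icc_prod_eq _ _
  have hzero : EqOn (fun p => fderiv ℝ F p (1, 0) + fderiv ℝ G p (0, 1)) 0
      (Icc (x₀, y₀) (x₁, y₁)) := fun p hp => by
    rw [hQ] at hp
    change fderiv ℝ F p (1, 0) + fderiv ℝ G p (0, 1) = 0
    rw [← (hF p hp).hasFDerivAt.pdx_eq, ← (hG p hp).hasFDerivAt.pdy_eq]
    exact hdiv p hp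
  have hint := integral_divergence_prod_Icc_of_hasFDerivAt_off_countable_of_le F G
    (fderiv ℝ F) (fderiv ℝ G) (x₀, y₀) (x₁, y₁) ⟨hx, hy⟩ ∅ countable_empty
    (fun p hp => (hF p (hQ ▸ hp)).continuousAt.continuousWithinAt)
    (fun p hp => (hG p (hQ ▸ hp)).continuousAt.continuousWithinAt)
    (fun p hp => (hF p (prod_mono Ioo_subset_Icc_self Ioo_subset_Icc_self hp.1)).hasFDerivAt)
    (fun p hp => (hG p (prod_mono Ioo_subset_Icc_self Ioo_subset_Icc_self hp.1)).hasFDerivAt)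
    ((integrableOn_zero).congr_fun hzero.symm measurableSet_Icc)
  rw [← hint, setIntegral_congr_fun measurableSet_Icc hzero]
  simp

theorem HasDerivAt.eq_of_eqOn_Icc {f g : ℝ → ℝ} {f' g' s t x : ℝ} (hst : s < t)
    (hx : x ∈ Icc s t) (hf : HasDerivAt f f' x) (hg : HasDerivAt g g' x)
    (hfg : EqOn f g (Icc s t)) : f' = g' :=
  (uniqueDiffOn_Icc hst x hx).eq_deriv _ hf.hasDerivWithinAt
    (hg.hasDerivWithinAt.congr hfg (hfg hx))

theorem HasDerivAt.eq_mul_of_eqOn_exp_integral {f φ : ℝ → ℝ} {f' c s t x : ℝ}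
    (hφ : Continuous φ) (hst : s < t) (hx : x ∈ Icc s t) (hf : HasDerivAt f f' x)
    (hfφ : ∀ x ∈ Icc s t, f x = Real.exp (∫ r in c..x, φ r)) : f' = φ x * f x := by
  rw [hf.eq_of_eqOn_Icc hst hx (hφ.integral_hasStrictDerivAt c x).hasDerivAt.exp hfφ,
    hfφ x hx, mul_comm]

section GreenFlux

variable {a b c u z : ℝ × ℝ → ℝ} {O : Set (ℝ × ℝ)} {t₀ : ℝ}

noncomputable def greenFluxX (a u z : ℝ × ℝ → ℝ) (q : ℝ × ℝ) : ℝ :=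
  u q * pdy z q + a q * u q * z q

noncomputable def greenFluxY (b u z : ℝ × ℝ → ℝ) (q : ℝ × ℝ) : ℝ :=
  b q * u q * z q - z q * pdx u q

theorem pdx_greenFluxX_add_pdy_greenFluxY (hO : IsOpen O) (hu : ContDiffOn ℝ 2 u O)
    (hz : ContDiffOn ℝ 2 z O) {p : ℝ × ℝ} (hp : p ∈ O) (ha : DifferentiableAt ℝ a p)
    (hb : DifferentiableAt ℝ b p) :
    pdx (greenFluxX a u z) p + pdy (greenFluxY b u z) p
      = u p * Lop a b c z p - z p * LstarOp a b c u p := by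
  obtain ⟨x, y⟩ := p
  have hO' : O ∈ nhds (x, y) := hO.mem_nhds hp
  have hu₁ : DifferentiableAt ℝ u (x, y) := (hu.contDiffAt hO').differentiableAt two_ne_zero
  have hz₁ : DifferentiableAt ℝ z (x, y) := (hz.contDiffAt hO').differentiableAt two_ne_zero
  have hux : DifferentiableAt ℝ (pdx u) (x, y) :=
    ((hu.pdx hO le_rfl).contDiffAt hO').differentiableAt one_ne_zero
  have hzy : DifferentiableAt ℝ (pdy z) (x, y) :=
    ((hz.pdy hO le_rfl).contDiffAt hO').differentiableAt one_ne_zero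
  have hF : pdx (greenFluxX a u z) (x, y)
      = pdx u (x, y) * pdy z (x, y) + u (x, y) * pdx (pdy z) (x, y)
        + (pdx (fun q => a q * u q) (x, y) * z (x, y) + a (x, y) * u (x, y) * pdx z (x, y)) :=
    ((hu₁.hasDerivAt_pdx.mul hzy.hasDerivAt_pdx).add
      ((ha.mul hu₁).hasDerivAt_pdx.mul hz₁.hasDerivAt_pdx)).deriv
  have hG : pdy (greenFluxY b u z) (x, y)
      = pdy (fun q => b q * u q) (x, y) * z (x, y) + b (x, y) * u (x, y) * pdy z (x, y)
        - (pdy z (x, y) * pdx u (x, y) + z (x, y) * pdxy u (x, y)) :=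
    (((hb.mul hu₁).hasDerivAt_pdy.mul hz₁.hasDerivAt_pdy).sub
      (hz₁.hasDerivAt_pdy.mul hux.hasDerivAt_pdy)).deriv
  rw [hF, hG, Lop, LstarOp, ← pdx_pdy_eq_pdxy hO hz hp]
  ring

theorem ContDiffOn.greenFluxX (hO : IsOpen O) (ha : ContDiffOn ℝ 1 a O)
    (hu : ContDiffOn ℝ 2 u O) (hz : ContDiffOn ℝ 2 z O) :
    ContDiffOn ℝ 1 (greenFluxX a u z) O :=
  ((hu.of_le one_le_two).mul (hz.pdy hO le_rfl)).add
    ((ha.mul (hu.of_le one_le_two)).mul (hz.of_le one_le_two))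

theorem ContDiffOn.greenFluxY (hO : IsOpen O) (hb : ContDiffOn ℝ 1 b O)
    (hu : ContDiffOn ℝ 2 u O) (hz : ContDiffOn ℝ 2 z O) :
    ContDiffOn ℝ 1 (greenFluxY b u z) O :=
  ((hb.mul (hu.of_le one_le_two)).mul (hz.of_le one_le_two)).sub
    ((hz.of_le one_le_two).mul (hu.pdx hO le_rfl))

theorem boundary_integral_greenFlux_eq_zero {x₀ x₁ y₀ y₁ : ℝ} (hx : x₀ ≤ x₁) (hy : y₀ ≤ y₁)
    (hO : IsOpen O) (hQO : Icc x₀ x₁ ×ˢ Icc y₀ y₁ ⊆ O) (ha : ContDiffOn ℝ 1 a O)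
    (hb : ContDiffOn ℝ 1 b O) (hu : ContDiffOn ℝ 2 u O) (hz : ContDiffOn ℝ 2 z O)
    (hLu : ∀ p ∈ Icc x₀ x₁ ×ˢ Icc y₀ y₁, LstarOp a b c u p = 0)
    (hLz : ∀ p ∈ Icc x₀ x₁ ×ˢ Icc y₀ y₁, Lop a b c z p = 0) :
    (((∫ x in x₀..x₁, greenFluxY b u z (x, y₁)) - ∫ x in x₀..x₁, greenFluxY b u z (x, y₀))
      + ∫ y in y₀..y₁, greenFluxX a u z (x₁, y)) - ∫ y in y₀..y₁, greenFluxX a u z (x₀, y)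
      = 0 := by
  have hdiff {g : ℝ × ℝ → ℝ} (hg : ContDiffOn ℝ 1 g O) (p) (hp : p ∈ Icc x₀ x₁ ×ˢ Icc y₀ y₁) :
      DifferentiableAt ℝ g p :=
    (hg.contDiffAt (hO.mem_nhds (hQO hp))).differentiableAt one_ne_zero
  refine boundary_integral_eq_zero_of_pdx_add_pdy_eq_zero hx hy
    (hdiff (ha.greenFluxX hO hu hz)) (hdiff (hb.greenFluxY hO hu hz)) fun p hp => ?_
  have hO' := hO.mem_nhds (hQO hp)
  rw [pdx_greenFluxX_add_pdy_greenFluxY hO hu hz (hQO hp)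
    ((ha.contDiffAt hO').differentiableAt one_ne_zero)
    ((hb.contDiffAt hO').differentiableAt one_ne_zero), hLu p hp, hLz p hp]
  ring

theorem integral_greenFluxY_eq_zero {x₀ x₁ y : ℝ} (hx : x₀ < x₁) (hb : Continuous b)
    (hu : ∀ x ∈ Icc x₀ x₁, DifferentiableAt ℝ u (x, y))
    (hub : ∀ x ∈ Icc x₀ x₁, u (x, y) = Real.exp (∫ s in t₀..x, b (s, y))) :
    ∫ x in x₀..x₁, greenFluxY b u z (x, y) = 0 := by
  refine (integral_congr (g := fun _ => 0) fun x hx' => ?_).trans integral_zero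
  rw [uIcc_of_le hx.le] at hx'
  have hux : pdx u (x, y) = b (x, y) * u (x, y) :=
    (hu x hx').hasDerivAt_pdx.eq_mul_of_eqOn_exp_integral (hb.comp (by fun_prop)) hx hx' hub
  simp only [greenFluxY, hux]
  ring

theorem integral_greenFluxX_eq_zero {x y₀ y₁ : ℝ} (hy : y₀ < y₁) (ha : Continuous a)
    (hz : ∀ y ∈ Icc y₀ y₁, DifferentiableAt ℝ z (x, y))
    (hza : ∀ y ∈ Icc y₀ y₁, z (x, y) = Real.exp (-∫ s in t₀..y, a (x, s))) :
    ∫ y in y₀..y₁, greenFluxX a u z (x, y) = 0 := by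
  refine (integral_congr (g := fun _ => 0) fun y hy' => ?_).trans integral_zero
  rw [uIcc_of_le hy.le] at hy'
  have hzy : pdy z (x, y) = -a (x, y) * z (x, y) :=
    (hz y hy').hasDerivAt_pdy.eq_mul_of_eqOn_exp_integral (φ := fun s => -a (x, s)) (c := t₀)
      (ha.comp (by fun_prop)).neg hy hy' fun y hy => by
        rw [hza y hy, intervalIntegral.integral_neg]
  simp only [greenFluxX, hzy]
  ring

theorem integral_greenFluxX_eq_sub {x y₀ y₁ : ℝ} (hy : y₀ < y₁) (ha : Continuous a)
    (hu : ∀ y ∈ Icc y₀ y₁, DifferentiableAt ℝ u (x, y))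
    (hz : ∀ y ∈ Icc y₀ y₁, DifferentiableAt ℝ z (x, y))
    (hF : ∀ y ∈ Icc y₀ y₁, ContinuousAt (greenFluxX a u z) (x, y))
    (hua : ∀ y ∈ Icc y₀ y₁, u (x, y) = Real.exp (∫ s in t₀..y, a (x, s))) :
    ∫ y in y₀..y₁, greenFluxX a u z (x, y) = u (x, y₁) * z (x, y₁) - u (x, y₀) * z (x, y₀) := by
  refine integral_eq_sub_of_hasDerivAt (f := fun y => u (x, y) * z (x, y))
    (f' := fun y => greenFluxX a u z (x, y)) (fun y hy' => ?_)
    (ContinuousOn.intervalIntegrable_of_Icc hy.le fun y hy' =>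
      (ContinuousAt.comp (f := fun y' => (x, y')) (hF y hy') (by fun_prop)).continuousWithinAt)
  rw [uIcc_of_le hy.le] at hy'
  have huy : pdy u (x, y) = a (x, y) * u (x, y) :=
    (hu y hy').hasDerivAt_pdy.eq_mul_of_eqOn_exp_integral (ha.comp (by fun_prop)) hy hy' hua
  refine ((hu y hy').hasDerivAt_pdy.fun_mul (hz y hy').hasDerivAt_pdy).congr_deriv ?_
  simp only [greenFluxX, huy]
  ring

theorem integral_greenFluxY_eq_sub {x₀ x₁ y : ℝ} (hx : x₀ < x₁) (hb : Continuous b)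
    (hu : ∀ x ∈ Icc x₀ x₁, DifferentiableAt ℝ u (x, y))
    (hz : ∀ x ∈ Icc x₀ x₁, DifferentiableAt ℝ z (x, y))
    (hG : ∀ x ∈ Icc x₀ x₁, ContinuousAt (greenFluxY b u z) (x, y))
    (hzb : ∀ x ∈ Icc x₀ x₁, z (x, y) = Real.exp (-∫ s in t₀..x, b (s, y))) :
    ∫ x in x₀..x₁, greenFluxY b u z (x, y) = u (x₀, y) * z (x₀, y) - u (x₁, y) * z (x₁, y) := by
  rw [integral_eq_sub_of_hasDerivAt (f := fun x => -(u (x, y) * z (x, y)))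
    (f' := fun x => greenFluxY b u z (x, y)) (fun x hx' => ?_)
    (ContinuousOn.intervalIntegrable_of_Icc hx.le fun x hx' =>
      (ContinuousAt.comp (f := fun x' => (x', y)) (hG x hx') (by fun_prop)).continuousWithinAt)]
  · ring
  rw [uIcc_of_le hx.le] at hx'
  have hzx : pdx z (x, y) = -b (x, y) * z (x, y) :=
    (hz x hx').hasDerivAt_pdx.eq_mul_of_eqOn_exp_integral (φ := fun s => -b (s, y)) (c := t₀)
      (hb.comp (by fun_prop)).neg hx hx' fun x hx => by
        rw [hzb x hx, intervalIntegral.integral_neg]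
  refine ((hu x hx').hasDerivAt_pdx.fun_mul (hz x hx').hasDerivAt_pdx).fun_neg.congr_deriv ?_
  simp only [greenFluxY, hzx]
  ring

theorem boundary_integral_greenFlux_eq {x₀ x₁ y₀ y₁ : ℝ} (hx : x₀ < x₁) (hy : y₀ < y₁)
    (ha : Continuous a) (hb : Continuous b)
    (hu : ∀ p ∈ Icc x₀ x₁ ×ˢ Icc y₀ y₁, DifferentiableAt ℝ u p)
    (hz : ∀ p ∈ Icc x₀ x₁ ×ˢ Icc y₀ y₁, DifferentiableAt ℝ z p)
    (hF : ∀ p ∈ Icc x₀ x₁ ×ˢ Icc y₀ y₁, ContinuousAt (greenFluxX a u z) p)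
    (hG : ∀ p ∈ Icc x₀ x₁ ×ˢ Icc y₀ y₁, ContinuousAt (greenFluxY b u z) p)
    (hub : ∀ x ∈ Icc x₀ x₁, u (x, y₀) = Real.exp (∫ s in x₀..x, b (s, y₀)))
    (hua : ∀ y ∈ Icc y₀ y₁, u (x₀, y) = Real.exp (∫ s in y₀..y, a (x₀, s)))
    (hzb : ∀ x ∈ Icc x₀ x₁, z (x, y₁) = Real.exp (-∫ s in x₁..x, b (s, y₁)))
    (hza : ∀ y ∈ Icc y₀ y₁, z (x₁, y) = Real.exp (-∫ s in y₁..y, a (x₁, s))) :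
    (((∫ x in x₀..x₁, greenFluxY b u z (x, y₁)) - ∫ x in x₀..x₁, greenFluxY b u z (x, y₀))
      + ∫ y in y₀..y₁, greenFluxX a u z (x₁, y)) - ∫ y in y₀..y₁, greenFluxX a u z (x₀, y)
      = u (x₀, y₀) * z (x₀, y₀) - u (x₁, y₁) * z (x₁, y₁) := by
  have bottom (x) (h : x ∈ Icc x₀ x₁) : (x, y₀) ∈ Icc x₀ x₁ ×ˢ Icc y₀ y₁ :=
    ⟨h, left_mem_Icc.2 hy.le⟩
  have top (x) (h : x ∈ Icc x₀ x₁) : (x, y₁) ∈ Icc x₀ x₁ ×ˢ Icc y₀ y₁ :=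
    ⟨h, right_mem_Icc.2 hy.le⟩
  have left (y) (h : y ∈ Icc y₀ y₁) : (x₀, y) ∈ Icc x₀ x₁ ×ˢ Icc y₀ y₁ :=
    ⟨left_mem_Icc.2 hx.le, h⟩
  have right (y) (h : y ∈ Icc y₀ y₁) : (x₁, y) ∈ Icc x₀ x₁ ×ˢ Icc y₀ y₁ :=
    ⟨right_mem_Icc.2 hx.le, h⟩
  rw [integral_greenFluxY_eq_sub hx hb (fun x h => hu _ (top x h)) (fun x h => hz _ (top x h))
      (fun x h => hG _ (top x h)) hzb,
    integral_greenFluxY_eq_zero hx hb (fun x h => hu _ (bottom x h)) hub,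
    integral_greenFluxX_eq_zero hy ha (fun y h => hz _ (right y h)) hza,
    integral_greenFluxX_eq_sub hy ha (fun y h => hu _ (left y h)) (fun y h => hz _ (left y h))
      (fun y h => hF _ (left y h)) hua]
  ring

end GreenFlux

theorem riemann_kernel_symmetry_general
    (a b c : ℝ × ℝ → ℝ) (ha : ContDiff ℝ 1 a) (hb : ContDiff ℝ 1 b)
    (x₀ x₁ y₀ y₁ : ℝ) (hx : x₀ < x₁) (hy : y₀ < y₁)
    (u z : ℝ × ℝ → ℝ)
    (O₁ : Set (ℝ × ℝ)) (hO₁ : IsOpen O₁) (hQO₁ : Icc x₀ x₁ ×ˢ Icc y₀ y₁ ⊆ O₁)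
    (hu : ContDiffOn ℝ 2 u O₁)
    (hLu : ∀ p ∈ Icc x₀ x₁ ×ˢ Icc y₀ y₁, LstarOp a b c u p = 0)
    (hub : ∀ x ∈ Icc x₀ x₁, u (x, y₀) = Real.exp (∫ s in x₀..x, b (s, y₀)))
    (hua : ∀ y ∈ Icc y₀ y₁, u (x₀, y) = Real.exp (∫ s in y₀..y, a (x₀, s)))
    (O₂ : Set (ℝ × ℝ)) (hO₂ : IsOpen O₂) (hQO₂ : Icc x₀ x₁ ×ˢ Icc y₀ y₁ ⊆ O₂)
    (hzreg : ContDiffOn ℝ 2 z O₂)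
    (hLz : ∀ p ∈ Icc x₀ x₁ ×ˢ Icc y₀ y₁, Lop a b c z p = 0)
    (hzb : ∀ x ∈ Icc x₀ x₁, z (x, y₁) = Real.exp (-∫ s in x₁..x, b (s, y₁)))
    (hza : ∀ y ∈ Icc y₀ y₁, z (x₁, y) = Real.exp (-∫ s in y₁..y, a (x₁, s))) :
    z (x₀, y₀) = u (x₁, y₁) := by
  have hO : IsOpen (O₁ ∩ O₂) := hO₁.inter hO₂
  have hQO : Icc x₀ x₁ ×ˢ Icc y₀ y₁ ⊆ O₁ ∩ O₂ := subset_inter hQO₁ hQO₂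
  have hu' : ContDiffOn ℝ 2 u (O₁ ∩ O₂) := hu.mono inter_subset_left
  have hz' : ContDiffOn ℝ 2 z (O₁ ∩ O₂) := hzreg.mono inter_subset_right
  have hsmooth {n : WithTop ℕ∞} {f : ℝ × ℝ → ℝ} (hf : ContDiffOn ℝ n f (O₁ ∩ O₂)) (p)
      (hp : p ∈ Icc x₀ x₁ ×ˢ Icc y₀ y₁) : ContDiffAt ℝ n f p :=
    hf.contDiffAt (hO.mem_nhds (hQO hp))
  have hgreen := boundary_integral_greenFlux_eq_zero hx.le hy.le hO hQO ha.contDiffOn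
    hb.contDiffOn hu' hz' hLu hLz
  rw [boundary_integral_greenFlux_eq hx hy ha.continuous hb.continuous
    (fun p hp => (hsmooth hu' p hp).differentiableAt two_ne_zero)
    (fun p hp => (hsmooth hz' p hp).differentiableAt two_ne_zero)
    (fun p hp => (hsmooth (ha.contDiffOn.greenFluxX hO hu' hz') p hp).continuousAt)
    (fun p hp => (hsmooth (hb.contDiffOn.greenFluxY hO hu' hz') p hp).continuousAt)
    hub hua hzb hza] at hgreen
  have hu₀ : u (x₀, y₀) = 1 := by simpa using hub x₀ (left_mem_Icc.2 hx.le)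
  have hz₁ : z (x₁, y₁) = 1 := by simpa using hza y₁ (right_mem_Icc.2 hy.le)
  rw [hu₀, hz₁] at hgreen
  linarith

/-- **Symmetry of the Riemann kernel**: the Riemann kernel of the adjoint equation
with pole `(x₀, y₀)`, evaluated at `(x₁, y₁)`, equals the Riemann kernel of the
original equation with pole `(x₁, y₁)`, evaluated at `(x₀, y₀)`. -/
theorem riemann_kernel_symmetry
    (a b c : ℝ × ℝ → ℝ) (ha : ContDiff ℝ 1 a) (hb : ContDiff ℝ 1 b) (hc : Continuous c)
    (x₀ x₁ y₀ y₁ : ℝ) (hx : x₀ < x₁) (hy : y₀ < y₁)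
    (u z : ℝ × ℝ → ℝ)
    (O₁ : Set (ℝ × ℝ)) (hO₁ : IsOpen O₁) (hQO₁ : Icc x₀ x₁ ×ˢ Icc y₀ y₁ ⊆ O₁)
    (hu : ContDiffOn ℝ 2 u O₁)
    (hLu : ∀ p ∈ Icc x₀ x₁ ×ˢ Icc y₀ y₁, LstarOp a b c u p = 0)
    (hub : ∀ x ∈ Icc x₀ x₁, u (x, y₀) = Real.exp (∫ s in x₀..x, b (s, y₀)))
    (hua : ∀ y ∈ Icc y₀ y₁, u (x₀, y) = Real.exp (∫ s in y₀..y, a (x₀, s)))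
    (O₂ : Set (ℝ × ℝ)) (hO₂ : IsOpen O₂) (hQO₂ : Icc x₀ x₁ ×ˢ Icc y₀ y₁ ⊆ O₂)
    (hzreg : ContDiffOn ℝ 2 z O₂)
    (hLz : ∀ p ∈ Icc x₀ x₁ ×ˢ Icc y₀ y₁, Lop a b c z p = 0)
    (hzb : ∀ x ∈ Icc x₀ x₁, z (x, y₁) = Real.exp (-∫ s in x₁..x, b (s, y₁)))
    (hza : ∀ y ∈ Icc y₀ y₁, z (x₁, y) = Real.exp (-∫ s in y₁..y, a (x₁, s))) :
    z (x₀, y₀) = u (x₁, y₁) :=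
  riemann_kernel_symmetry_general a b c ha hb x₀ x₁ y₀ y₁ hx hy u z O₁ hO₁ hQO₁ hu hLu hub hua O₂
    hO₂ hQO₂ hzreg hLz hzb hza
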